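/- Let d be a natural number and let r : Fin d → ℍ be a quaternion vector with Re(r i) = 0 for all i and with r j ≠ 0 for some j. Then there exist quaternion vectors h, t : Fin d → ℍ such that ∑_{i} ((h i ⊗ r i) · (t i)) ≠ ∑_{i} ((t i ⊗ r i) · (h i)). (Vector form of Proposition 2.) -/

import Mathlib

open Quaternion

/-- The dot product of two quaternions: the sum of the products of their
real and three imaginary components. -/
noncomputable def qdot (q₁ q₂ : ℍ[ℝ]) : ℝ :=
  q₁.re * q₂.re + q₁.imI * q₂.imI + q₁.imJ * q₂.imJ + q₁.imK * q₂.imK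

/-!
Writing `p · q = Re (p * conj q)` and using `Re (conj x) = Re x`, one gets
`(t r) · h = Re (h * conj r * conj t)`, which for a pure quaternion `r` (so `conj r = -r`)
is `-(h r) · t`. Hence the two sides of the claimed inequality are `S` and `-S` with
`S = ∑ (h i r i) · (t i)`, and `h = 1`, `t = r` makes `S = ∑ |r i|² > 0`.
-/

theorem qdot_eq_re_mul_star (p q : ℍ[ℝ]) : qdot p q = (p * star q).re := by
  simp only [qdot, re_mul, re_star, imI_star, imJ_star, imK_star]
  ring

theorem qdot_self (q : ℍ[ℝ]) : qdot q q = normSq q := by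
  rw [qdot_eq_re_mul_star, normSq_def]

theorem qdot_mul_swap_of_re_eq_zero {r : ℍ[ℝ]} (hr : r.re = 0) (h t : ℍ[ℝ]) :
    qdot (t * r) h = -qdot (h * r) t := by
  rw [qdot_eq_re_mul_star, qdot_eq_re_mul_star, ← re_star]
  simp only [star_mul, star_star, star_eq_neg.mpr hr, mul_neg, neg_mul, re_neg, mul_assoc]

theorem sum_qdot_mul_swap_of_re_eq_zero {ι : Type*} (s : Finset ι) {r : ι → ℍ[ℝ]}
    (hr : ∀ i, (r i).re = 0) (h t : ι → ℍ[ℝ]) :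
    ∑ i ∈ s, qdot (t i * r i) (h i) = -∑ i ∈ s, qdot (h i * r i) (t i) := by
  rw [← Finset.sum_neg_distrib]
  exact Finset.sum_congr rfl fun i _ => qdot_mul_swap_of_re_eq_zero (hr i) (h i) (t i)

theorem sum_qdot_self_pos {ι : Type*} [Fintype ι] {r : ι → ℍ[ℝ]} (hne : ∃ j, r j ≠ 0) :
    0 < ∑ i, qdot (r i) (r i) := by
  obtain ⟨j, hj⟩ := hne
  simp only [qdot_self]
  exact Finset.sum_pos' (fun i _ => normSq_nonneg)
    ⟨j, Finset.mem_univ j, normSq_nonneg.lt_of_ne' (mt normSq_eq_zero.mp hj)⟩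

theorem asymmetric_pattern_vector (d : ℕ) (r : Fin d → ℍ[ℝ])
    (hre : ∀ i, (r i).re = 0) (hne : ∃ j, r j ≠ 0) :
    ∃ h t : Fin d → ℍ[ℝ],
      ∑ i, qdot (h i * r i) (t i) ≠ ∑ i, qdot (t i * r i) (h i) := by
  refine ⟨1, r, ?_⟩
  rw [sum_qdot_mul_swap_of_re_eq_zero _ hre 1 r]
  simp only [Pi.one_apply, one_mul]
  exact (neg_lt_self (sum_qdot_self_pos hne)).ne'
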